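/- arXiv:2010.12102 — 3 statements merged into one kernel-verified Lean document; each statement's English description precedes it below -/
import Mathlib

section
/- (Elliptical potential lemma; Lemma 11 of Abbasi-Yadkori et al., used as Lemma 3 in the paper.) Let λ ≥ max(1, L²), let x_1, …, x_T ∈ ℝ^d satisfy ‖x_t‖₂ ≤ L for all t, and define A_t = λ I_d + Σ_{i=1}^t x_i x_iᵀ (so A_0 = λ I_d). Then Σ_{t=1}^T x_tᵀ A_{t-1}⁻¹ x_t ≤ 2 log( det(A_T) / λ^d ). -/
/-!
Write `B = A_{t-1}` and `s = x_tᵀ B⁻¹ x_t`. By the matrix determinant lemma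
`det A_t = det B · (1 + s)`, so the sum of the `log (1 + s_t)` telescopes to `log (det A_T / λ^d)`.
Since `B ≥ λ I` and `‖x_t‖² ≤ L² ≤ λ`, each `s_t ≤ ‖x_t‖² / λ ≤ 1`, and on `[0, 2]` one has
`s ≤ 2 log (1 + s)`.
-/

open Matrix Finset

theorem Finset.sum_Icc_one_sub {M : Type*} [AddCommGroup M] (f : ℕ → M) (n : ℕ) :
    ∑ i ∈ Icc 1 n, (f i - f (i - 1)) = f n - f 0 := by
  induction n with
  | zero => simp
  | succ n ih => rw [sum_Icc_succ_top (by omega), ih, Nat.add_sub_cancel]; abel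

theorem Real.le_two_mul_log_one_add {s : ℝ} (hs₀ : 0 ≤ s) (hs₂ : s ≤ 2) :
    s ≤ 2 * Real.log (1 + s) := by
  have h := Real.le_log_one_add_of_nonneg hs₀
  rw [div_le_iff₀ (by linarith)] at h
  nlinarith

namespace Matrix

variable {n : Type*} [Fintype n] [DecidableEq n]

theorem det_add_vecMulVec {R : Type*} [CommRing R] {B : Matrix n n R} (hB : IsUnit B.det)
    (u v : n → R) : (B + vecMulVec u v).det = B.det * (1 + v ⬝ᵥ (B⁻¹ *ᵥ u)) := by
  rw [vecMulVec_eq Unit, det_add_replicateCol_mul_replicateRow hB, Matrix.mul_assoc,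
    ← replicateCol_mulVec, replicateRow_mul_replicateCol, det_unique (n := Unit)]
  rfl

theorem dotProduct_inv_smul_one_add_mulVec_le {lam : ℝ} (hlam : 0 < lam) {S : Matrix n n ℝ}
    (hS : S.PosSemidef) (v : n → ℝ) :
    v ⬝ᵥ ((lam • 1 + S)⁻¹ *ᵥ v) ≤ (v ⬝ᵥ v) / lam := by
  set B := lam • 1 + S
  have hB : IsUnit B.det := ((PosDef.one.smul hlam).add_posSemidef hS).isUnit.map detMonoidHom
  set u := B⁻¹ *ᵥ v
  have hBu : B *ᵥ u = v := by rw [mulVec_mulVec, mul_nonsing_inv _ hB, one_mulVec]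
  have hquad : lam * (u ⬝ᵥ u) ≤ v ⬝ᵥ u := by
    have hSu : 0 ≤ u ⬝ᵥ (S *ᵥ u) := by simpa using hS.dotProduct_mulVec_nonneg u
    have : v ⬝ᵥ u = lam * (u ⬝ᵥ u) + u ⬝ᵥ (S *ᵥ u) := by
      rw [← hBu, dotProduct_comm, add_mulVec, dotProduct_add, smul_mulVec, one_mulVec,
        dotProduct_smul, smul_eq_mul]
    linarith
  -- expand `0 ≤ ‖v - λ u‖²` and bound `λ² ‖u‖²` by `λ (v ⬝ᵥ u)`
  have hexp : 0 ≤ (v - lam • u) ⬝ᵥ (v - lam • u) :=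
    Finset.sum_nonneg fun i _ => mul_self_nonneg _
  simp only [sub_dotProduct, dotProduct_sub, smul_dotProduct, dotProduct_smul, smul_eq_mul,
    dotProduct_comm u v] at hexp
  rw [le_div_iff₀ hlam]
  nlinarith

theorem PosDef.dotProduct_inv_mulVec_le_two_mul_log_det_add_vecMulVec {B : Matrix n n ℝ}
    (hB : B.PosDef) {v : n → ℝ} (hv : v ⬝ᵥ (B⁻¹ *ᵥ v) ≤ 2) :
    v ⬝ᵥ (B⁻¹ *ᵥ v) ≤ 2 * (Real.log (B + vecMulVec v v).det - Real.log B.det) := by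
  have hs : 0 ≤ v ⬝ᵥ (B⁻¹ *ᵥ v) := by simpa using hB.inv.posSemidef.dotProduct_mulVec_nonneg v
  rw [det_add_vecMulVec (hB.isUnit.map detMonoidHom), Real.log_mul hB.det_pos.ne' (by positivity),
    add_sub_cancel_left]
  exact Real.le_two_mul_log_one_add hs hv

end Matrix

/-- Elliptical potential lemma (Lemma 11 of Abbasi-Yadkori et al.):
if `λ ≥ max 1 L²`, `‖x_t‖₂ ≤ L` for `t = 1, …, T`, and
`A_t = λ I + ∑_{i=1}^t x_i x_iᵀ`, then
`∑_{t=1}^T x_tᵀ A_{t-1}⁻¹ x_t ≤ 2 log (det A_T / λ^d)`. -/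
theorem elliptical_potential {d : ℕ} (T : ℕ) (L lam : ℝ)
    (hlam : max 1 (L ^ 2) ≤ lam)
    (x : ℕ → Fin d → ℝ)
    (hx : ∀ t ∈ Finset.Icc 1 T, Real.sqrt (x t ⬝ᵥ x t) ≤ L)
    (A : ℕ → Matrix (Fin d) (Fin d) ℝ)
    (hA : ∀ t, A t = lam • (1 : Matrix (Fin d) (Fin d) ℝ)
        + ∑ i ∈ Finset.Icc 1 t, vecMulVec (x i) (x i)) :
    ∑ t ∈ Finset.Icc 1 T, x t ⬝ᵥ ((A (t - 1))⁻¹ *ᵥ x t)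
      ≤ 2 * Real.log ((A T).det / lam ^ d) := by
  obtain ⟨hlam1, hL⟩ := max_le_iff.mp hlam
  have hlam0 : 0 < lam := by linarith
  have hgram : ∀ t, (∑ i ∈ Icc 1 t, vecMulVec (x i) (x i)).PosSemidef := fun t =>
    posSemidef_sum _ fun i _ => by simpa using posSemidef_vecMulVec_self_star (x i)
  have hpd : ∀ t, (A t).PosDef := fun t =>
    hA t ▸ (PosDef.one.smul hlam0).add_posSemidef (hgram t)
  have hstep : ∀ t ∈ Icc 1 T, x t ⬝ᵥ ((A (t - 1))⁻¹ *ᵥ x t)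
      ≤ 2 * (Real.log (A t).det - Real.log (A (t - 1)).det) := by
    intro t ht
    obtain ⟨m, rfl⟩ : ∃ m, t = m + 1 := ⟨t - 1, by grind⟩
    have hsucc : A (m + 1) = A m + vecMulVec (x (m + 1)) (x (m + 1)) := by
      rw [hA, hA, sum_Icc_succ_top (by omega), add_assoc]
    have hnorm : x (m + 1) ⬝ᵥ x (m + 1) ≤ lam :=
      ((Real.sqrt_le_iff.mp (hx _ ht)).2).trans hL
    have hquad : x (m + 1) ⬝ᵥ ((A m)⁻¹ *ᵥ x (m + 1)) ≤ 1 :=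
      (hA m ▸ dotProduct_inv_smul_one_add_mulVec_le hlam0 (hgram m) _).trans
        ((div_le_one₀ hlam0).mpr hnorm)
    rw [Nat.add_sub_cancel, hsucc]
    exact (hpd m).dotProduct_inv_mulVec_le_two_mul_log_det_add_vecMulVec (by linarith)
  have hdet0 : (A 0).det = lam ^ d := by simp [hA 0]
  calc ∑ t ∈ Icc 1 T, x t ⬝ᵥ ((A (t - 1))⁻¹ *ᵥ x t)
      ≤ ∑ t ∈ Icc 1 T, 2 * (Real.log (A t).det - Real.log (A (t - 1)).det) := sum_le_sum hstep
    _ = 2 * Real.log ((A T).det / lam ^ d) := by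
      rw [← mul_sum, sum_Icc_one_sub (fun t => Real.log (A t).det), hdet0,
        Real.log_div (hpd T).det_pos.ne' (by positivity)]
end

section
/- (Determinant bound; Lemma 10 of Abbasi-Yadkori et al., used as Lemma 4 in the paper.) Let λ > 0, d ≥ 1, let x_1, …, x_t ∈ ℝ^d satisfy ‖x_i‖₂ ≤ L for all i, and define A_t = λ I_d + Σ_{i=1}^t x_i x_iᵀ. Then det(A_t) ≤ (λ + t L² / d)^d. -/
open Matrix Finset

/-! The regularized Gram matrix is positive semidefinite, so its determinant is the product
of its eigenvalues and its trace their sum; AM-GM bounds the product by `(trace / d) ^ d`, and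
the trace is `d λ + ∑ ‖x_i‖² ≤ d λ + t L²`. -/

theorem Real.prod_le_sum_div_card_pow {ι : Type*} (s : Finset ι) (z : ι → ℝ)
    (hz : ∀ i ∈ s, 0 ≤ z i) : ∏ i ∈ s, z i ≤ ((∑ i ∈ s, z i) / #s) ^ #s := by
  rcases s.eq_empty_or_nonempty with rfl | hs
  · simp
  have hcard : (0 : ℝ) < #s := by exact_mod_cast hs.card_pos
  have amgm := Real.geom_mean_le_arith_mean s (fun _ ↦ 1) z (fun _ _ ↦ zero_le_one)
    (by simpa using hcard) hz
  simp only [Real.rpow_one, sum_const, nsmul_eq_mul, mul_one, one_mul] at amgm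
  rw [Real.rpow_inv_le_iff_of_pos (prod_nonneg hz) (div_nonneg (sum_nonneg hz) hcard.le) hcard,
    Real.rpow_natCast] at amgm
  exact amgm

theorem Matrix.PosSemidef.det_le_trace_div_card_pow {n : Type*} [Fintype n] [DecidableEq n]
    {A : Matrix n n ℝ} (hA : A.PosSemidef) :
    A.det ≤ (A.trace / Fintype.card n) ^ Fintype.card n := by
  rw [hA.isHermitian.det_eq_prod_eigenvalues, hA.isHermitian.trace_eq_sum_eigenvalues]
  simpa using Real.prod_le_sum_div_card_pow univ _ fun i _ ↦ hA.eigenvalues_nonneg i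

theorem Matrix.posSemidef_smul_one_add_sum_vecMulVec {n ι : Type*} [Fintype n] [DecidableEq n]
    {lam : ℝ} (hlam : 0 ≤ lam) (s : Finset ι) (x : ι → n → ℝ) :
    (lam • (1 : Matrix n n ℝ) + ∑ i ∈ s, vecMulVec (x i) (x i)).PosSemidef :=
  (PosSemidef.one.smul hlam).add <|
    posSemidef_sum s fun i _ ↦ by simpa using posSemidef_vecMulVec_self_star (x i)

theorem Matrix.trace_smul_one_add_sum_vecMulVec {n ι : Type*} [Fintype n] [DecidableEq n]
    (lam : ℝ) (s : Finset ι) (x : ι → n → ℝ) :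
    (lam • (1 : Matrix n n ℝ) + ∑ i ∈ s, vecMulVec (x i) (x i)).trace
      = lam * Fintype.card n + ∑ i ∈ s, x i ⬝ᵥ x i := by
  simp [trace_sum]

theorem det_regularized_gram_le_general {d : ℕ} (t : ℕ) (L lam : ℝ)
    (hlam : 0 < lam)
    (x : ℕ → Fin d → ℝ)
    (hx : ∀ i ∈ Finset.Icc 1 t, Real.sqrt (x i ⬝ᵥ x i) ≤ L) :
    (lam • (1 : Matrix (Fin d) (Fin d) ℝ)
        + ∑ i ∈ Finset.Icc 1 t, vecMulVec (x i) (x i)).det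
      ≤ (lam + t * L ^ 2 / d) ^ d := by
  have hA := posSemidef_smul_one_add_sum_vecMulVec hlam.le (Icc 1 t) x
  have hgram : ∑ i ∈ Icc 1 t, x i ⬝ᵥ x i ≤ t * L ^ 2 := by
    calc ∑ i ∈ Icc 1 t, x i ⬝ᵥ x i ≤ ∑ _i ∈ Icc 1 t, L ^ 2 :=
          sum_le_sum fun i hi ↦ (Real.sqrt_le_iff.mp (hx i hi)).2
      _ = t * L ^ 2 := by simp
  have htrace : (lam • (1 : Matrix (Fin d) (Fin d) ℝ)
      + ∑ i ∈ Icc 1 t, vecMulVec (x i) (x i)).trace / d ≤ lam + t * L ^ 2 / d := by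
    rw [trace_smul_one_add_sum_vecMulVec, Fintype.card_fin, add_div, mul_div_assoc]
    gcongr
    -- `d / d ≤ 1` rather than `= 1`, so that `d = 0` (where `d / d = 0`) needs no case split
    exact mul_le_of_le_one_right hlam.le (div_self_le_one _)
  calc _ ≤ _ := by simpa using hA.det_le_trace_div_card_pow
    _ ≤ _ := pow_le_pow_left₀ (div_nonneg hA.trace_nonneg d.cast_nonneg) htrace d

/-- Determinant bound (Lemma 10 of Abbasi-Yadkori et al.): if `‖x_i‖₂ ≤ L` for
`i = 1, …, t`, then `det (λ I + ∑_{i=1}^t x_i x_iᵀ) ≤ (λ + t L² / d)^d`. -/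
theorem det_regularized_gram_le {d : ℕ} (hd : 1 ≤ d) (t : ℕ) (L lam : ℝ)
    (hlam : 0 < lam)
    (x : ℕ → Fin d → ℝ)
    (hx : ∀ i ∈ Finset.Icc 1 t, Real.sqrt (x i ⬝ᵥ x i) ≤ L) :
    (lam • (1 : Matrix (Fin d) (Fin d) ℝ)
        + ∑ i ∈ Finset.Icc 1 t, vecMulVec (x i) (x i)).det
      ≤ (lam + t * L ^ 2 / d) ^ d :=
  det_regularized_gram_le_general t L lam hlam x hx
end

section
/- (Per-round regret of the Fair-LinUCB selection rule.) Let A be a d × d real positive definite matrix, α > 0, γ ≥ 0, and θ̂, θ* ∈ ℝ^d with ‖θ̂ − θ*‖_A ≤ α. Let 𝒜 be a nonempty finite set of arms with feature vectors x_a ∈ ℝ^d for a ∈ 𝒜, and let penalties P_a ∈ ℝ satisfy 0 ≤ P_a ≤ γ · α · min_{a' ∈ 𝒜} ‖x_{a'}‖_{A⁻¹} for every a ∈ 𝒜. Suppose the chosen arm â maximizes over a ∈ 𝒜 the index ⟨θ̂, x_a⟩ + α ‖x_a‖_{A⁻¹} + P_a. Then for every arm a* ∈ 𝒜, ⟨θ*,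 x_{a*}⟩ − ⟨θ*, x_â⟩ ≤ (2 + γ) · α · ‖x_â‖_{A⁻¹}. -/
/-!
The estimation error `(θ̂ - θ*) ⬝ᵥ x` is bounded in absolute value by `α ‖x‖_{A⁻¹}` (Cauchy–Schwarz
for the inner product induced by `A`, applied to `θ̂ - θ*` and `A⁻¹ x`). So the upper confidence
index of `a*` dominates its true reward, the index of `â` overshoots by at most `2 α ‖x_â‖_{A⁻¹}`,
and the penalty of `â` exceeds that of `a*` by at most `γ α ‖x_â‖_{A⁻¹}`.
-/

open Matrix Finset

lemma Matrix.PosSemidef.dotProduct_mulVec_sq_le {n : Type*} [Fintype n]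
    {M : Matrix n n ℝ} (hM : M.PosSemidef) (u v : n → ℝ) :
    (u ⬝ᵥ (M *ᵥ v)) ^ 2 ≤ (u ⬝ᵥ (M *ᵥ u)) * (v ⬝ᵥ (M *ᵥ v)) := by
  let := M.toSeminormedAddCommGroup hM
  let := M.toInnerProductSpace hM
  have hinner (x y : n → ℝ) : inner ℝ x y = x ⬝ᵥ (M *ᵥ y) := dotProduct_comm _ _
  simpa only [sq, hinner] using real_inner_mul_inner_self_le u v

lemma Matrix.PosDef.abs_dotProduct_le {n : Type*} [Fintype n] [DecidableEq n]
    {A : Matrix n n ℝ} (hA : A.PosDef) (u v : n → ℝ) :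
    |u ⬝ᵥ v| ≤ √(u ⬝ᵥ (A *ᵥ u)) * √(v ⬝ᵥ (A⁻¹ *ᵥ v)) := by
  have hv : A *ᵥ (A⁻¹ *ᵥ v) = v := by
    rw [mulVec_mulVec, mul_nonsing_inv _ ((isUnit_iff_isUnit_det A).1 hA.isUnit), one_mulVec]
  have h := hA.posSemidef.dotProduct_mulVec_sq_le u (A⁻¹ *ᵥ v)
  rw [hv, dotProduct_comm (A⁻¹ *ᵥ v)] at h
  have hu : 0 ≤ u ⬝ᵥ (A *ᵥ u) := by simpa only [star_trivial] using hA.posSemidef.dotProduct_mulVec_nonneg u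
  exact (Real.abs_le_sqrt h).trans_eq (Real.sqrt_mul hu _)

lemma abs_dotProduct_sub_le_of_confidence {n : Type*} [Fintype n] [DecidableEq n]
    {A : Matrix n n ℝ} (hA : A.PosDef) {θ θ' : n → ℝ} {α : ℝ}
    (hconf : √((θ - θ') ⬝ᵥ (A *ᵥ (θ - θ'))) ≤ α) (v : n → ℝ) :
    |θ ⬝ᵥ v - θ' ⬝ᵥ v| ≤ α * √(v ⬝ᵥ (A⁻¹ *ᵥ v)) := by
  rw [← sub_dotProduct]
  exact (hA.abs_dotProduct_le _ v).trans
    (mul_le_mul_of_nonneg_right hconf (Real.sqrt_nonneg _))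

lemma sub_le_of_le_optimistic_index {ι : Type*} (μ μhat b P : ι → ℝ) {γ : ℝ} {a₀ a : ι}
    (hucb : μ a ≤ μhat a + b a) (hlcb : μhat a₀ - b a₀ ≤ μ a₀)
    (hP : 0 ≤ P a) (hP₀ : P a₀ ≤ γ * b a₀)
    (hmax : μhat a + b a + P a ≤ μhat a₀ + b a₀ + P a₀) :
    μ a - μ a₀ ≤ (2 + γ) * b a₀ := by
  linarith

theorem fair_linucb_per_round_regret_general {d : ℕ} {ι : Type*}
    (A : Matrix (Fin d) (Fin d) ℝ) (hA : A.PosDef)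
    (α γ : ℝ) (hγ : 0 ≤ γ)
    (θhat θstar : Fin d → ℝ)
    (hconf : Real.sqrt ((θhat - θstar) ⬝ᵥ (A *ᵥ (θhat - θstar))) ≤ α)
    (𝒜 : Finset ι) (h𝒜 : 𝒜.Nonempty)
    (x : ι → Fin d → ℝ) (P : ι → ℝ)
    (hP : ∀ a ∈ 𝒜, 0 ≤ P a ∧
      P a ≤ γ * α * 𝒜.inf' h𝒜 fun a' => Real.sqrt (x a' ⬝ᵥ (A⁻¹ *ᵥ x a')))
    (ahat : ι) (hahat : ahat ∈ 𝒜)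
    (hmax : ∀ a ∈ 𝒜,
      θhat ⬝ᵥ x a + α * Real.sqrt (x a ⬝ᵥ (A⁻¹ *ᵥ x a)) + P a
        ≤ θhat ⬝ᵥ x ahat + α * Real.sqrt (x ahat ⬝ᵥ (A⁻¹ *ᵥ x ahat)) + P ahat) :
    ∀ astar ∈ 𝒜,
      θstar ⬝ᵥ x astar - θstar ⬝ᵥ x ahat
        ≤ (2 + γ) * α * Real.sqrt (x ahat ⬝ᵥ (A⁻¹ *ᵥ x ahat)) := by
  intro astar hastar
  have hα : 0 ≤ α := (Real.sqrt_nonneg _).trans hconf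
  have hest (a : ι) := abs_le.1 (abs_dotProduct_sub_le_of_confidence hA hconf (x a))
  rw [mul_assoc]
  refine sub_le_of_le_optimistic_index (fun a => θstar ⬝ᵥ x a) (fun a => θhat ⬝ᵥ x a)
    (fun a => α * √(x a ⬝ᵥ (A⁻¹ *ᵥ x a))) P ?_ ?_ (hP astar hastar).1 ?_ (hmax astar hastar)
  · linarith [(hest astar).1]
  · linarith [(hest ahat).2]
  · calc P ahat ≤ γ * α * 𝒜.inf' h𝒜 (fun a' => √(x a' ⬝ᵥ (A⁻¹ *ᵥ x a'))) := (hP ahat hahat).2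
      _ ≤ γ * α * √(x ahat ⬝ᵥ (A⁻¹ *ᵥ x ahat)) := by gcongr; exact inf'_le _ hahat
      _ = γ * (α * √(x ahat ⬝ᵥ (A⁻¹ *ᵥ x ahat))) := mul_assoc _ _ _

/-- Per-round regret of the Fair-LinUCB selection rule: if
`‖θ̂ - θ*‖_A ≤ α`, the penalties satisfy
`0 ≤ P_a ≤ γ α min_{a'} ‖x_{a'}‖_{A⁻¹}`, and the chosen arm `â` maximizes
`⟨θ̂, x_a⟩ + α ‖x_a‖_{A⁻¹} + P_a` over the arm set, then for every arm `a*`,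
`⟨θ*, x_{a*}⟩ - ⟨θ*, x_â⟩ ≤ (2 + γ) α ‖x_â‖_{A⁻¹}`. -/
theorem fair_linucb_per_round_regret {d : ℕ} {ι : Type*}
    (A : Matrix (Fin d) (Fin d) ℝ) (hA : A.PosDef)
    (α γ : ℝ) (hα : 0 < α) (hγ : 0 ≤ γ)
    (θhat θstar : Fin d → ℝ)
    (hconf : Real.sqrt ((θhat - θstar) ⬝ᵥ (A *ᵥ (θhat - θstar))) ≤ α)
    (𝒜 : Finset ι) (h𝒜 : 𝒜.Nonempty)
    (x : ι → Fin d → ℝ) (P : ι → ℝ)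
    (hP : ∀ a ∈ 𝒜, 0 ≤ P a ∧
      P a ≤ γ * α * 𝒜.inf' h𝒜 fun a' => Real.sqrt (x a' ⬝ᵥ (A⁻¹ *ᵥ x a')))
    (ahat : ι) (hahat : ahat ∈ 𝒜)
    (hmax : ∀ a ∈ 𝒜,
      θhat ⬝ᵥ x a + α * Real.sqrt (x a ⬝ᵥ (A⁻¹ *ᵥ x a)) + P a
        ≤ θhat ⬝ᵥ x ahat + α * Real.sqrt (x ahat ⬝ᵥ (A⁻¹ *ᵥ x ahat)) + P ahat) :
    ∀ astar ∈ 𝒜,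
      θstar ⬝ᵥ x astar - θstar ⬝ᵥ x ahat
        ≤ (2 + γ) * α * Real.sqrt (x ahat ⬝ᵥ (A⁻¹ *ᵥ x ahat)) :=
  fair_linucb_per_round_regret_general A hA α γ hγ θhat θstar hconf 𝒜 h𝒜 x P hP ahat hahat hmax
end
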